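/- Let R_s, L_d, L_q > 0 and let ω : ℝ → ℝ be continuous. Let Φ : ℝ → ℝ^{2×2} be the solution of Φ' = 𝒜(t)·Φ with Φ(0) = I₂, where 𝒜(t) = Q⁻¹·A(t), Q := diag(L_d, L_q), A(t) := [[−R_s, ω(t)·L_q], [−ω(t)·L_d, −R_s]]. Then for every x ∈ ℝ² and all t ≥ 0, |Φ(t)·x|² ≤ m·e^{−ρ t}·|x|², where m := max{L_d/L_q, L_q/L_d} / min{L_d/L_q, L_q/L_d} and ρ := R_s·min{1/L_q, 1/L_d}; in particular Φ(t) → 0 as t → ∞. -/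

import Mathlib

open Matrix Real Filter Topology

/-!
With `Q = diag(L_d, L_q)`, the energy `E(y) = |Q y|²` satisfies, along `y' = Q⁻¹A(t) y`,
`E' = 2 ⟪Q y, A(t) y⟫ = -2 R_s (L_d y₀² + L_q y₁²)`: the terms in `ω` cancel because
`Q (A(t) + R_s I)` is skew-symmetric. Since `L_d y₀² + L_q y₁² ≥ min(1/L_q, 1/L_d) E(y)`,
Grönwall gives `E(Φ(t)x) ≤ e^{-2ρt} E(x)`, and comparing `E` with `|·|²` costs the condition
number of `Q²`.
-/

theorem le_mul_exp_of_hasDerivAt_le_mul {f f' : ℝ → ℝ} {K t : ℝ}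
    (hf : ∀ s, HasDerivAt f (f' s) s) (bound : ∀ s, f' s ≤ K * f s) (ht : 0 ≤ t) :
    f t ≤ f 0 * exp (K * t) := by
  have := le_gronwallBound_of_liminf_deriv_right_le (δ := f 0) (ε := 0)
    (fun s _ => (hf s).continuousAt.continuousWithinAt)
    (fun s _ r hr => (hf s).hasDerivWithinAt.liminf_right_slope_le hr) le_rfl
    (fun s _ => by simpa using bound s) t ⟨ht, le_rfl⟩
  simpa [gronwallBound_ε0] using this

theorem hasDerivAt_mulVec_of_hasDerivAt_mul {n : Type*} [Fintype n] {Φ M : ℝ → Matrix n n ℝ}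
    {t : ℝ} (hΦ : ∀ i j, HasDerivAt (fun s => Φ s i j) ((M t * Φ t) i j) t) (x : n → ℝ) :
    HasDerivAt (fun s => Φ s *ᵥ x) (M t *ᵥ (Φ t *ᵥ x)) t := by
  rw [hasDerivAt_pi, mulVec_mulVec]
  intro i
  simp only [mulVec, dotProduct]
  exact HasDerivAt.fun_sum fun j _ => (hΦ i j).mul_const (x j)

theorem tendsto_zero_of_sq_le_mul_exp {f : ℝ → ℝ} {C ρ : ℝ} (hρ : 0 < ρ)
    (hf : ∀ t ≥ 0, f t ^ 2 ≤ C * exp (-ρ * t)) : Tendsto f atTop (𝓝 0) := by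
  have hexp : Tendsto (fun t => C * exp (-ρ * t)) atTop (𝓝 0) := by
    simpa using (tendsto_exp_atBot.comp
      (tendsto_id.const_mul_atTop_of_neg (neg_neg_iff_pos.2 hρ))).const_mul C
  have hsq : Tendsto (fun t => f t ^ 2) atTop (𝓝 0) :=
    squeeze_zero' (.of_forall fun t => sq_nonneg _) (eventually_ge_atTop 0 |>.mono hf) hexp
  refine (tendsto_zero_iff_abs_tendsto_zero f).2 ?_
  simpa [Function.comp_def, sqrt_sq_eq_abs] using hsq.sqrt

theorem max_div_min_div_eq {a b : ℝ} (ha : 0 < a) (hb : 0 < b) :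
    max (a / b) (b / a) / min (a / b) (b / a) = max (a ^ 2) (b ^ 2) / min (a ^ 2) (b ^ 2) := by
  rcases le_total a b with h | h
  · have h1 : a / b ≤ b / a := by rw [div_le_div_iff₀ hb ha]; nlinarith
    rw [max_eq_right h1, min_eq_left h1, max_eq_right (by gcongr), min_eq_left (by gcongr)]
    field_simp
  · have h1 : b / a ≤ a / b := by rw [div_le_div_iff₀ ha hb]; nlinarith
    rw [max_eq_left h1, min_eq_right h1, max_eq_left (by gcongr), min_eq_right (by gcongr)]
    field_simp

namespace DQModel

variable {Rs Ld Lq : ℝ}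

/-- `Q⁻¹A` for `Q = diag(Ld, Lq)` and `A = [[-Rs, w Lq], [-w Ld, -Rs]]`. -/
noncomputable def matrix (Rs Ld Lq w : ℝ) : Matrix (Fin 2) (Fin 2) ℝ :=
  !![-Rs / Ld, w * Lq / Ld; -w * Ld / Lq, -Rs / Lq]

/-- `|Q y|²`. -/
def energy (Ld Lq : ℝ) (y : Fin 2 → ℝ) : ℝ :=
  (Ld * y 0) ^ 2 + (Lq * y 1) ^ 2

theorem hasDerivAt_energy {y : ℝ → Fin 2 → ℝ} {t w : ℝ} (hLd : Ld ≠ 0) (hLq : Lq ≠ 0)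
    (hy : HasDerivAt y (matrix Rs Ld Lq w *ᵥ y t) t) :
    HasDerivAt (fun s => energy Ld Lq (y s)) (-2 * Rs * (Ld * y t 0 ^ 2 + Lq * y t 1 ^ 2)) t := by
  rw [hasDerivAt_pi] at hy
  refine ((((hy 0).const_mul Ld).fun_pow 2).fun_add
    (((hy 1).const_mul Lq).fun_pow 2)).congr_deriv ?_
  simp only [matrix, mulVec, dotProduct, Fin.sum_univ_two, cons_val', cons_val_zero, cons_val_one,
    empty_val', cons_val_fin_one, of_apply, Nat.cast_ofNat]
  linear_combination (2 * Ld * y t 0 * (-Rs * y t 0 + w * Lq * y t 1)) * mul_inv_cancel₀ hLd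
    + (2 * Lq * y t 1 * (-w * Ld * y t 0 - Rs * y t 1)) * mul_inv_cancel₀ hLq

theorem min_inv_mul_energy_le (hLd : 0 < Ld) (hLq : 0 < Lq) (y : Fin 2 → ℝ) :
    min (1 / Lq) (1 / Ld) * energy Ld Lq y ≤ Ld * y 0 ^ 2 + Lq * y 1 ^ 2 := by
  have h0 : min (1 / Lq) (1 / Ld) * (Ld * y 0) ^ 2 ≤ Ld * y 0 ^ 2 := by
    calc min (1 / Lq) (1 / Ld) * (Ld * y 0) ^ 2 ≤ 1 / Ld * (Ld * y 0) ^ 2 := by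
          gcongr; exact min_le_right _ _
      _ = Ld * y 0 ^ 2 := by field_simp
  have h1 : min (1 / Lq) (1 / Ld) * (Lq * y 1) ^ 2 ≤ Lq * y 1 ^ 2 := by
    calc min (1 / Lq) (1 / Ld) * (Lq * y 1) ^ 2 ≤ 1 / Lq * (Lq * y 1) ^ 2 := by
          gcongr; exact min_le_left _ _
      _ = Lq * y 1 ^ 2 := by field_simp
  rw [energy, mul_add]
  exact add_le_add h0 h1

theorem energy_mulVec_le (hRs : 0 ≤ Rs) (hLd : 0 < Ld) (hLq : 0 < Lq) {ω : ℝ → ℝ}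
    {Φ : ℝ → Matrix (Fin 2) (Fin 2) ℝ}
    (hΦ : ∀ t i j, HasDerivAt (fun s => Φ s i j) ((matrix Rs Ld Lq (ω t) * Φ t) i j) t)
    (hΦ0 : Φ 0 = 1) (x : Fin 2 → ℝ) {t : ℝ} (ht : 0 ≤ t) :
    energy Ld Lq (Φ t *ᵥ x)
      ≤ energy Ld Lq x * exp (-(2 * (Rs * min (1 / Lq) (1 / Ld))) * t) := by
  have hE s := hasDerivAt_energy hLd.ne' hLq.ne'
    (hasDerivAt_mulVec_of_hasDerivAt_mul (M := fun t => matrix Rs Ld Lq (ω t)) (hΦ s) x)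
  have bound s := mul_le_mul_of_nonneg_left (min_inv_mul_energy_le hLd hLq (Φ s *ᵥ x)) hRs
  have := le_mul_exp_of_hasDerivAt_le_mul (K := -(2 * (Rs * min (1 / Lq) (1 / Ld)))) hE
    (fun s => by linarith [bound s]) ht
  rwa [hΦ0, one_mulVec] at this

theorem min_sq_mul_le_energy (y : Fin 2 → ℝ) :
    min (Ld ^ 2) (Lq ^ 2) * (y 0 ^ 2 + y 1 ^ 2) ≤ energy Ld Lq y := by
  rw [energy, mul_pow, mul_pow, mul_add]
  gcongr
  exacts [min_le_left _ _, min_le_right _ _]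

theorem energy_le_max_sq_mul (y : Fin 2 → ℝ) :
    energy Ld Lq y ≤ max (Ld ^ 2) (Lq ^ 2) * (y 0 ^ 2 + y 1 ^ 2) := by
  rw [energy, mul_pow, mul_pow, mul_add]
  gcongr
  exacts [le_max_left _ _, le_max_right _ _]

theorem sq_add_sq_mulVec_le (hRs : 0 ≤ Rs) (hLd : 0 < Ld) (hLq : 0 < Lq) {ω : ℝ → ℝ}
    {Φ : ℝ → Matrix (Fin 2) (Fin 2) ℝ}
    (hΦ : ∀ t i j, HasDerivAt (fun s => Φ s i j) ((matrix Rs Ld Lq (ω t) * Φ t) i j) t)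
    (hΦ0 : Φ 0 = 1) (x : Fin 2 → ℝ) {t : ℝ} (ht : 0 ≤ t) :
    (Φ t *ᵥ x) 0 ^ 2 + (Φ t *ᵥ x) 1 ^ 2
      ≤ max (Ld / Lq) (Lq / Ld) / min (Ld / Lq) (Lq / Ld)
        * exp (-(Rs * min (1 / Lq) (1 / Ld)) * t) * (x 0 ^ 2 + x 1 ^ 2) := by
  set ρ := Rs * min (1 / Lq) (1 / Ld)
  have hmin : 0 < min (Ld ^ 2) (Lq ^ 2) := by positivity
  have hdecay : exp (-(2 * ρ) * t) ≤ exp (-ρ * t) := by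
    gcongr; nlinarith [show 0 ≤ ρ by positivity]
  rw [max_div_min_div_eq hLd hLq, div_mul_eq_mul_div, div_mul_eq_mul_div, le_div_iff₀ hmin,
    mul_comm]
  calc min (Ld ^ 2) (Lq ^ 2) * ((Φ t *ᵥ x) 0 ^ 2 + (Φ t *ᵥ x) 1 ^ 2)
      ≤ energy Ld Lq (Φ t *ᵥ x) := min_sq_mul_le_energy _
    _ ≤ energy Ld Lq x * exp (-(2 * ρ) * t) := energy_mulVec_le hRs hLd hLq hΦ hΦ0 x ht
    _ ≤ max (Ld ^ 2) (Lq ^ 2) * (x 0 ^ 2 + x 1 ^ 2) * exp (-ρ * t) := by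
        gcongr
        exact energy_le_max_sq_mul x
    _ = _ := by ring

end DQModel

theorem stmt_16_general
    (Rs Ld Lq : ℝ) (hRs : 0 < Rs) (hLd : 0 < Ld) (hLq : 0 < Lq)
    (ω : ℝ → ℝ)
    (Φ : ℝ → Matrix (Fin 2) (Fin 2) ℝ)
    (hΦ : ∀ t i j, HasDerivAt (fun s => Φ s i j)
      ((!![-Rs / Ld, ω t * Lq / Ld; -(ω t) * Ld / Lq, -Rs / Lq] * Φ t) i j) t)
    (hΦ0 : Φ 0 = 1) :
    (∀ x : Fin 2 → ℝ, ∀ t ≥ (0:ℝ),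
      ((Φ t *ᵥ x) 0) ^ 2 + ((Φ t *ᵥ x) 1) ^ 2
        ≤ (max (Ld / Lq) (Lq / Ld) / min (Ld / Lq) (Lq / Ld))
          * Real.exp (-(Rs * min (1 / Lq) (1 / Ld)) * t)
          * ((x 0) ^ 2 + (x 1) ^ 2)) ∧
    (∀ i j, Filter.Tendsto (fun t => Φ t i j) Filter.atTop (nhds 0)) := by
  have hbound x t (ht : 0 ≤ t) :=
    DQModel.sq_add_sq_mulVec_le hRs.le hLd hLq hΦ hΦ0 x ht
  refine ⟨hbound, fun i j => ?_⟩
  apply tendsto_zero_of_sq_le_mul_exp (show 0 < Rs * min (1 / Lq) (1 / Ld) by positivity)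
  intro t ht
  have hcol := hbound (Pi.single j 1) t ht
  have hunit :
      (Pi.single j 1 : Fin 2 → ℝ) 0 ^ 2 + (Pi.single j 1 : Fin 2 → ℝ) 1 ^ 2 = 1 := by
    fin_cases j <;> simp
  rw [hunit, mul_one, mulVec_single_one, col_apply, col_apply] at hcol
  fin_cases i
  · exact (le_add_of_nonneg_right (sq_nonneg _)).trans hcol
  · exact (le_add_of_nonneg_left (sq_nonneg _)).trans hcol

/-- the state-transition matrix `Φ` of the homogeneous LTV system
`ẋ = Q⁻¹A(t)x` satisfies `|Φ(t)x|² ≤ m·e^{−ρt}·|x|²` for all `x ∈ ℝ²` and `t ≥ 0`,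
with `m = max{L_d/L_q, L_q/L_d}/min{L_d/L_q, L_q/L_d}` and `ρ = R_s·min{1/L_q, 1/L_d}`;
in particular `Φ(t) → 0` as `t → ∞`. -/
theorem stmt_16
    (Rs Ld Lq : ℝ) (hRs : 0 < Rs) (hLd : 0 < Ld) (hLq : 0 < Lq)
    (ω : ℝ → ℝ) (hω : Continuous ω)
    (Φ : ℝ → Matrix (Fin 2) (Fin 2) ℝ)
    (hΦ : ∀ t i j, HasDerivAt (fun s => Φ s i j)
      ((!![-Rs / Ld, ω t * Lq / Ld; -(ω t) * Ld / Lq, -Rs / Lq] * Φ t) i j) t)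
    (hΦ0 : Φ 0 = 1) :
    (∀ x : Fin 2 → ℝ, ∀ t ≥ (0:ℝ),
      ((Φ t *ᵥ x) 0) ^ 2 + ((Φ t *ᵥ x) 1) ^ 2
        ≤ (max (Ld / Lq) (Lq / Ld) / min (Ld / Lq) (Lq / Ld))
          * Real.exp (-(Rs * min (1 / Lq) (1 / Ld)) * t)
          * ((x 0) ^ 2 + (x 1) ^ 2)) ∧
    (∀ i j, Filter.Tendsto (fun t => Φ t i j) Filter.atTop (nhds 0)) :=
  stmt_16_general Rs Ld Lq hRs hLd hLq ω Φ hΦ hΦ0
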